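/- arXiv:2007.08307 — 4 statements merged into one kernel-verified Lean document; each statement's English description precedes it below -/
import Mathlib

section
/- Consider a rewriting system given by the union of several deterministic sub-relations A, B, C, D, E with a priority order, where a step of a lower-priority relation is only allowed when no higher-priority step applies. If the composite pairs B∘A, C∘A, C∘B, D∘(anything), E∘B, E∘C, E∘D, E∘E, and E∘A*∘X for X ∈ {B,C,D,E} are all empty (as relations, reading left to right in reduction order), then the reflexive-transitive closure of the combined relation factors as A* ∘ B* ∘ C* ∘ (D? ∪ E? ∘ A*). -/
/-!
Induction on the first step of a reduction `a → c →* b`, with `c →* b` already factored.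
An `A`-step is simply prepended. For a step of lower priority the emptiness hypotheses say that
nothing of higher priority can follow it, which collapses the leading blocks of the factorization
of `c →* b` to the identity; the step then opens its own block. After a `D`-step nothing follows
at all, and after an `E`-step only `A`-steps can follow, which is why the tail is `D? ∪ E? ∘ A*`.
-/

open Relation

variable {α : Type*}

/-- Prioritized B-step: allowed only when no A-step applies. -/
def PrioB (A B : α → α → Prop) (a b : α) : Prop :=
  (∀ c, ¬ A a c) ∧ B a b

/-- Prioritized C-step: allowed only when no A- or B-step applies. -/
def PrioC (A B C : α → α → Prop) (a b : α) : Prop :=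
  (∀ c, ¬ A a c) ∧ (∀ c, ¬ B a c) ∧ C a b

/-- Prioritized D-step: allowed only when no A-, B- or C-step applies. -/
def PrioD (A B C D : α → α → Prop) (a b : α) : Prop :=
  (∀ c, ¬ A a c) ∧ (∀ c, ¬ B a c) ∧ (∀ c, ¬ C a c) ∧ D a b

/-- Prioritized E-step: allowed only when no A-, B-, C- or D-step applies. -/
def PrioE (A B C D E : α → α → Prop) (a b : α) : Prop :=
  (∀ c, ¬ A a c) ∧ (∀ c, ¬ B a c) ∧ (∀ c, ¬ C a c) ∧ (∀ c, ¬ D a c) ∧ E a b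

/-- The combined prioritized reduction relation. -/
def PrioStep (A B C D E : α → α → Prop) (a b : α) : Prop :=
  A a b ∨ PrioB A B a b ∨ PrioC A B C a b ∨ PrioD A B C D a b ∨ PrioE A B C D E a b

theorem PrioB.prioStep {A B C D E : α → α → Prop} {a b : α} (h : PrioB A B a b) :
    PrioStep A B C D E a b :=
  Or.inr <| Or.inl h

theorem PrioC.prioStep {A B C D E : α → α → Prop} {a b : α} (h : PrioC A B C a b) :
    PrioStep A B C D E a b :=
  Or.inr <| Or.inr <| Or.inl h

theorem PrioD.prioStep {A B C D E : α → α → Prop} {a b : α} (h : PrioD A B C D a b) :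
    PrioStep A B C D E a b :=
  Or.inr <| Or.inr <| Or.inr <| Or.inl h

theorem PrioE.prioStep {A B C D E : α → α → Prop} {a b : α} (h : PrioE A B C D E a b) :
    PrioStep A B C D E a b :=
  Or.inr <| Or.inr <| Or.inr <| Or.inr h

/-- The right-hand side `A* ∘ B* ∘ C* ∘ (D? ∪ E? ∘ A*)` of the factorization. -/
def PrioFactored (A B C D E : α → α → Prop) (a b : α) : Prop :=
  ∃ x y z : α, ReflTransGen A a x ∧ ReflTransGen (PrioB A B) x y ∧
    ReflTransGen (PrioC A B C) y z ∧
    (ReflGen (PrioD A B C D) z b ∨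
      ∃ w : α, ReflGen (PrioE A B C D E) z w ∧ ReflTransGen A w b)

namespace PrioFactored

variable {A B C D E : α → α → Prop} {a b c : α}

theorem refl : PrioFactored A B C D E a a :=
  ⟨a, a, a, .refl, .refl, .refl, Or.inl .refl⟩

theorem reflTransGen (h : PrioFactored A B C D E a b) :
    ReflTransGen (PrioStep A B C D E) a b := by
  obtain ⟨x, y, z, hax, hxy, hyz, hzb⟩ := h
  have liftA : ReflTransGen A ≤ ReflTransGen (PrioStep A B C D E) :=
    ReflTransGen.mono fun _ _ => Or.inl
  have hzb' : ReflTransGen (PrioStep A B C D E) z b := by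
    rcases hzb with hD | ⟨w, hE, hwb⟩
    · exact ReflTransGen.mono (fun _ _ => PrioD.prioStep) _ _ hD.to_reflTransGen
    · exact (ReflTransGen.mono (fun _ _ => PrioE.prioStep) _ _ hE.to_reflTransGen).trans
        (liftA _ _ hwb)
  exact (liftA _ _ hax).trans <|
    (ReflTransGen.mono (fun _ _ => PrioB.prioStep) _ _ hxy).trans <|
    (ReflTransGen.mono (fun _ _ => PrioC.prioStep) _ _ hyz).trans hzb'

theorem head_A (h : A a c) (hf : PrioFactored A B C D E c b) :
    PrioFactored A B C D E a b := by
  obtain ⟨x, y, z, hcx, hxy, hyz, hzb⟩ := hf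
  exact ⟨x, y, z, .head h hcx, hxy, hyz, hzb⟩

theorem head_prioB (hBA : ∀ a b c, PrioB A B a b → A b c → False)
    (h : PrioB A B a c) (hf : PrioFactored A B C D E c b) :
    PrioFactored A B C D E a b := by
  obtain ⟨x, y, z, hcx, hxy, hyz, hzb⟩ := hf
  obtain rfl := (reflTransGen_iff_eq fun d => hBA a c d h).1 hcx |>.symm
  exact ⟨a, y, z, .refl, .head h hxy, hyz, hzb⟩

theorem head_prioC (hCA : ∀ a b c, PrioC A B C a b → A b c → False)
    (hCB : ∀ a b c, PrioC A B C a b → PrioB A B b c → False)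
    (h : PrioC A B C a c) (hf : PrioFactored A B C D E c b) :
    PrioFactored A B C D E a b := by
  obtain ⟨x, y, z, hcx, hxy, hyz, hzb⟩ := hf
  obtain rfl := (reflTransGen_iff_eq fun d => hCA a c d h).1 hcx |>.symm
  obtain rfl := (reflTransGen_iff_eq fun d => hCB a c d h).1 hxy |>.symm
  exact ⟨a, a, z, .refl, .refl, .head h hyz, hzb⟩

theorem head_prioD (hD : ∀ a b c, PrioD A B C D a b → PrioStep A B C D E b c → False)
    (h : PrioD A B C D a c) (hf : PrioFactored A B C D E c b) :
    PrioFactored A B C D E a b := by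
  obtain rfl := (reflTransGen_iff_eq fun d => hD a c d h).1 hf.reflTransGen |>.symm
  exact ⟨a, a, a, .refl, .refl, .refl, Or.inl (.single h)⟩

theorem head_prioE
    (hEAB : ∀ a b c d, PrioE A B C D E a b → ReflTransGen A b c → PrioB A B c d → False)
    (hEAC : ∀ a b c d, PrioE A B C D E a b → ReflTransGen A b c → PrioC A B C c d → False)
    (hEAD : ∀ a b c d, PrioE A B C D E a b → ReflTransGen A b c → PrioD A B C D c d → False)
    (hEAE : ∀ a b c d, PrioE A B C D E a b → ReflTransGen A b c → PrioE A B C D E c d → False)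
    (h : PrioE A B C D E a c) (hf : PrioFactored A B C D E c b) :
    PrioFactored A B C D E a b := by
  obtain ⟨x, y, z, hcx, hxy, hyz, hzb⟩ := hf
  obtain rfl := (reflTransGen_iff_eq fun d => hEAB a c x d h hcx).1 hxy |>.symm
  obtain rfl := (reflTransGen_iff_eq fun d => hEAC a c x d h hcx).1 hyz |>.symm
  refine ⟨a, a, a, .refl, .refl, .refl, Or.inr ⟨c, .single h, ?_⟩⟩
  rcases hzb with (_ | hD) | ⟨w, _ | hE, hwb⟩
  · exact hcx
  · exact (hEAD a c x b h hcx hD).elim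
  · exact hcx.trans hwb
  · exact (hEAE a c x w h hcx hE).elim

end PrioFactored

theorem prioritized_factorization_general (A B C D E : α → α → Prop)
    (hBA : ∀ a b c, PrioB A B a b → A b c → False)
    (hCA : ∀ a b c, PrioC A B C a b → A b c → False)
    (hCB : ∀ a b c, PrioC A B C a b → PrioB A B b c → False)
    (hD : ∀ a b c, PrioD A B C D a b → PrioStep A B C D E b c → False)
    (hEAB : ∀ a b c d, PrioE A B C D E a b → ReflTransGen A b c → PrioB A B c d → False)
    (hEAC : ∀ a b c d, PrioE A B C D E a b → ReflTransGen A b c → PrioC A B C c d → False)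
    (hEAD : ∀ a b c d, PrioE A B C D E a b → ReflTransGen A b c → PrioD A B C D c d → False)
    (hEAE : ∀ a b c d, PrioE A B C D E a b → ReflTransGen A b c → PrioE A B C D E c d → False) :
    ∀ a b : α, ReflTransGen (PrioStep A B C D E) a b ↔
      ∃ x y z : α, ReflTransGen A a x ∧ ReflTransGen (PrioB A B) x y ∧
        ReflTransGen (PrioC A B C) y z ∧
        (ReflGen (PrioD A B C D) z b ∨
          ∃ w : α, ReflGen (PrioE A B C D E) z w ∧ ReflTransGen A w b) := by
  intro a b
  refine ⟨fun h => ?_, PrioFactored.reflTransGen⟩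
  induction h using ReflTransGen.head_induction_on with
  | refl => exact PrioFactored.refl
  | head hstep _ ih =>
    rcases hstep with hA | hB | hC | hD' | hE
    · exact PrioFactored.head_A hA ih
    · exact PrioFactored.head_prioB hBA hB ih
    · exact PrioFactored.head_prioC hCA hCB hC ih
    · exact PrioFactored.head_prioD hD hD' ih
    · exact PrioFactored.head_prioE hEAB hEAC hEAD hEAE hE ih

/-- If the listed composite reduction pairs/triples of the prioritized system are
empty, then the reflexive-transitive closure of the combined relation factors as
`A* ∘ B* ∘ C* ∘ (D? ∪ E? ∘ A*)`. -/
theorem prioritized_factorization (A B C D E : α → α → Prop)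
    (hdetA : ∀ a b b', A a b → A a b' → b = b')
    (hdetB : ∀ a b b', B a b → B a b' → b = b')
    (hdetC : ∀ a b b', C a b → C a b' → b = b')
    (hdetD : ∀ a b b', D a b → D a b' → b = b')
    (hdetE : ∀ a b b', E a b → E a b' → b = b')
    (hBA : ∀ a b c, PrioB A B a b → A b c → False)
    (hCA : ∀ a b c, PrioC A B C a b → A b c → False)
    (hCB : ∀ a b c, PrioC A B C a b → PrioB A B b c → False)
    (hD : ∀ a b c, PrioD A B C D a b → PrioStep A B C D E b c → False)
    (hEB : ∀ a b c, PrioE A B C D E a b → PrioB A B b c → False)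
    (hEC : ∀ a b c, PrioE A B C D E a b → PrioC A B C b c → False)
    (hED : ∀ a b c, PrioE A B C D E a b → PrioD A B C D b c → False)
    (hEE : ∀ a b c, PrioE A B C D E a b → PrioE A B C D E b c → False)
    (hEAB : ∀ a b c d, PrioE A B C D E a b → ReflTransGen A b c → PrioB A B c d → False)
    (hEAC : ∀ a b c d, PrioE A B C D E a b → ReflTransGen A b c → PrioC A B C c d → False)
    (hEAD : ∀ a b c d, PrioE A B C D E a b → ReflTransGen A b c → PrioD A B C D c d → False)
    (hEAE : ∀ a b c d, PrioE A B C D E a b → ReflTransGen A b c → PrioE A B C D E c d → False) :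
    ∀ a b : α, ReflTransGen (PrioStep A B C D E) a b ↔
      ∃ x y z : α, ReflTransGen A a x ∧ ReflTransGen (PrioB A B) x y ∧
        ReflTransGen (PrioC A B C) y z ∧
        (ReflGen (PrioD A B C D) z b ∨
          ∃ w : α, ReflGen (PrioE A B C D E) z w ∧ ReflTransGen A w b) :=
  prioritized_factorization_general A B C D E hBA hCA hCB hD hEAB hEAC hEAD hEAE
end

section
/- For lists over a type with a distinguished reduction relation on elements: if σ = [s₁, …, sₙ] and the 'standard reduction' of σ reduces the leftmost reducible element, then deleting any fixed set of positions from σ commutes with standard reduction up to reflexivity: the standard reduct of the sublist is either equal to the sublist, or obtained by deleting the same positions from the standard reduct of σ. -/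
variable {α : Type*}

/-- Standard reduction of a list: reduce the leftmost reducible entry. -/
inductive ListStep (s : α → α → Prop) : List α → List α → Prop
  | head {a b : α} {l : List α} : s a b → ListStep s (a :: l) (b :: l)
  | tail {a : α} {l l' : List α} : (∀ b, ¬ s a b) → ListStep s l l' →
      ListStep s (a :: l) (a :: l')

/-- Delete the entries of a list at a fixed set of positions. -/
def deletePos (I : Finset ℕ) (l : List α) : List α :=
  (l.zipIdx.filter fun p => p.2 ∉ I).map Prod.fst

/-!
Deleting positions `I` from `a :: l` either drops `a` or keeps it, and in both cases deletes the
shifted positions `{n | n + 1 ∈ I}` from `l`. So a reduction of the head survives or disappears,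
and a reduction in the tail is transported by induction on the step.
-/

noncomputable def shiftPos (I : Finset ℕ) : Finset ℕ :=
  I.preimage (· + 1) (add_left_injective 1).injOn

@[simp]
lemma mem_shiftPos {I : Finset ℕ} {n : ℕ} : n ∈ shiftPos I ↔ n + 1 ∈ I :=
  Finset.mem_preimage

lemma deletePos_cons (I : Finset ℕ) (a : α) (l : List α) :
    deletePos I (a :: l) =
      if 0 ∈ I then deletePos (shiftPos I) l else a :: deletePos (shiftPos I) l := by
  simp only [deletePos, List.zipIdx_cons, List.zipIdx_succ, List.filter_cons, List.filter_map]
  by_cases h0 : 0 ∈ I <;> simp [h0, Function.comp_def]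

theorem deletePos_listStep_general (sred : α → α → Prop)
    (I : Finset ℕ) (σ σ' : List α) (h : ListStep sred σ σ') :
    deletePos I σ = deletePos I σ' ∨ ListStep sred (deletePos I σ) (deletePos I σ') := by
  induction h generalizing I with
  | head hab =>
    rw [deletePos_cons, deletePos_cons]
    split_ifs
    exacts [Or.inl rfl, Or.inr (.head hab)]
  | tail ha _ ih =>
    rw [deletePos_cons, deletePos_cons]
    split_ifs
    · exact ih (shiftPos I)
    · rcases ih (shiftPos I) with heq | hstep
      exacts [Or.inl (congrArg _ heq), Or.inr (.tail ha hstep)]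

/-- Deleting a fixed set of positions commutes with standard (leftmost)
reduction of lists, up to reflexivity: the result of deleting the positions
from the standard reduct is either the deleted list itself or its standard
reduct. -/
theorem deletePos_listStep (red sred : α → α → Prop)
    (hsub : ∀ a b, sred a b → red a b)
    (hdet : ∀ a b b', sred a b → sred a b' → b = b')
    (I : Finset ℕ) (σ σ' : List α) (h : ListStep sred σ σ') :
    deletePos I σ = deletePos I σ' ∨ ListStep sred (deletePos I σ) (deletePos I σ') :=
  deletePos_listStep_general sred I σ σ' h
end

section
/- In a Dyck-word representation of pasting contexts, excising two distinct peaks commutes: if p and q are distinct peaks of a Dyck word d (neither contained in the portion removed by the other), then excising p and then the transported q yields the same Dyck word as excising q and then the transported p. -/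
/-- Dyck words of excess `n`. -/
inductive Dyck : ℕ → Type
  | base : Dyck 0
  | up {n : ℕ} : Dyck n → Dyck (n + 1)
  | down {n : ℕ} : Dyck (n + 1) → Dyck n

/-- Peaks of a Dyck word: an up-move immediately followed by a down-move. -/
inductive Dyck.Peak : ∀ {n : ℕ}, Dyck n → Type
  | here {n : ℕ} (d : Dyck n) : Peak (d.up.down)
  | up {n : ℕ} {d : Dyck n} : Peak d → Peak d.up
  | down {n : ℕ} {d : Dyck (n + 1)} : Peak d → Peak d.down

/-- Excision of a peak. -/
def Dyck.excise : ∀ {n : ℕ} {d : Dyck n}, d.Peak → Dyck n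
  | _, _, .here d => d
  | _, _, .up p => (excise p).up
  | _, _, .down p => (excise p).down

/-- Transport of the peak `q` along excision of the peak `p`; it is `none`
exactly when the two peaks coincide. -/
def Dyck.transport : ∀ {n : ℕ} {d : Dyck n} (p : d.Peak), d.Peak → Option (Dyck.excise p).Peak
  | _, _, .here _, .here _ => none
  | _, _, .here _, .down (.up q) => some q
  | _, _, .up p, .up q => (transport p q).map .up
  | _, _, .down (.up p), .here _ => some (.here (Dyck.excise p))
  | _, _, .down p, .down q => (transport p q).map .down

/-! The commutation is stated as `(transport p q).map excise = (transport q p).map excise`, an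
equation in `Option (Dyck n)`: this compares words rather than peaks of different words, and it
holds for all `p q` (both sides are `none` when `p = q`). By induction on `p`, excision and
transport commute with the constructors; the only other case is the final peak of a word
`d ↑↓` against a peak `q₀` of `d`, where both orders of excision leave `excise q₀`. -/

namespace Dyck

variable {n : ℕ}

@[simp]
lemma transport_up {d : Dyck n} (p q : d.Peak) :
    transport p.up q.up = (transport p q).map .up := rfl

@[simp]
lemma transport_down {d : Dyck (n + 1)} (p q : d.Peak) :
    transport p.down q.down = (transport p q).map .down := by
  cases p <;> rfl

lemma excise_comp_up {d : Dyck n} : excise ∘ @Peak.up n d = up ∘ excise := rfl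

lemma excise_comp_down {d : Dyck (n + 1)} : excise ∘ @Peak.down n d = down ∘ excise := rfl

lemma transport_eq_none_iff {d : Dyck n} {p q : d.Peak} : transport p q = none ↔ p = q := by
  induction p with
  | here => cases q with
    | here => simp [transport]
    | down q => cases q; simp [transport]
  | up p ih => cases q; simp [excise, ih]
  | down p ih => cases q with
    | here => cases p; simp [transport]
    | down q => simp [excise, ih]

lemma map_excise_transport_comm {d : Dyck n} (p q : d.Peak) :
    (transport p q).map excise = (transport q p).map excise := by
  induction p with
  | here => cases q with
    | here => rfl
    | down q => cases q; rfl
  | up p ih =>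
    cases q with
    | up q =>
      simp only [transport_up, excise, Option.map_map, excise_comp_up]
      simpa only [Option.map_map] using congrArg (Option.map up) (ih q)
  | down p ih => cases q with
    | here => cases p; rfl
    | down q =>
      simp only [transport_down, excise, Option.map_map, excise_comp_down]
      simpa only [Option.map_map] using congrArg (Option.map down) (ih q)

end Dyck

/-- Excising two distinct peaks commutes: excising `p` and then the transported
copy of `q` yields the same Dyck word as excising `q` and then the transported
copy of `p`. -/
theorem excise_excise_comm {n : ℕ} (d : Dyck n) (p q : d.Peak) (hpq : p ≠ q) :
    ∃ (q' : (Dyck.excise p).Peak) (p' : (Dyck.excise q).Peak),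
      Dyck.transport p q = some q' ∧ Dyck.transport q p = some p' ∧
      Dyck.excise q' = Dyck.excise p' := by
  obtain ⟨q', hq⟩ := Option.ne_none_iff_exists'.mp (Dyck.transport_eq_none_iff.not.mpr hpq)
  obtain ⟨p', hp⟩ := Option.ne_none_iff_exists'.mp (Dyck.transport_eq_none_iff.not.mpr hpq.symm)
  exact ⟨q', p', hq, hp, by simpa [hq, hp] using Dyck.map_excise_transport_comm p q⟩
end

section
/- Any presheaf on a small category that sends a specified class of limits to colimits is determined up to isomorphism by its restriction along a full, bijective-on-objects functor that preserves those limits; concretely: if K : A → B is bijective on objects, full, and preserves the specified limits, then the restriction functor from limit-to-colimit-sending presheaves on B to those on A is fully faithful. -/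
open CategoryTheory CategoryTheory.Limits

/-!
Precomposition with a full, essentially surjective functor `K` is fully faithful on whole
functor categories, hence on any full subcategory of presheaves.  A natural transformation is
determined by its components at the objects `K a`, because every object is isomorphic to one of
them; and a family `θ a : P (K a) ⟶ Q (K a)` natural in `a` extends to all of `B` by transport
along these isomorphisms, naturality in `B` coming from fullness of `K`.
-/

namespace CategoryTheory

variable {C D E : Type*} [Category C] [Category D] [Category E]

lemma NatTrans.app_eq_map_inv_comp_app_comp_map {G H : D ⥤ E} (η : G ⟶ H) {d d' : D}
    (e : d ≅ d') : η.app d' = G.map e.inv ≫ η.app d ≫ H.map e.hom := by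
  simp

@[simps]
noncomputable def Functor.extendNatTransOfFullOfEssSurj (K : C ⥤ D) [K.Full] [K.EssSurj]
    {G H : D ⥤ E} (θ : K ⋙ G ⟶ K ⋙ H) : G ⟶ H where
  app d := G.map (K.objObjPreimageIso d).inv ≫ θ.app (K.objPreimage d) ≫
    H.map (K.objObjPreimageIso d).hom
  naturality d d' f := by
    obtain ⟨u, hu⟩ := K.map_surjective
      ((K.objObjPreimageIso d).hom ≫ f ≫ (K.objObjPreimageIso d').inv)
    have hf : f = (K.objObjPreimageIso d).inv ≫ K.map u ≫ (K.objObjPreimageIso d').hom := by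
      simp [hu]
    have hθ : G.map (K.map u) ≫ θ.app _ = θ.app _ ≫ H.map (K.map u) := θ.naturality u
    simp only [hf, Functor.map_comp, Category.assoc, Iso.map_hom_inv_id_assoc,
      reassoc_of% hθ]

instance Functor.faithful_whiskeringLeft_obj_of_essSurj (K : C ⥤ D) [K.EssSurj] :
    ((Functor.whiskeringLeft C D E).obj K).Faithful where
  map_injective {G H} η₁ η₂ h := by
    ext d
    have h' : η₁.app (K.obj (K.objPreimage d)) = η₂.app (K.obj (K.objPreimage d)) :=
      congr_app h (K.objPreimage d)
    rw [NatTrans.app_eq_map_inv_comp_app_comp_map η₁ (K.objObjPreimageIso d),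
      NatTrans.app_eq_map_inv_comp_app_comp_map η₂ (K.objObjPreimageIso d), h']

instance Functor.full_whiskeringLeft_obj_of_full_of_essSurj (K : C ⥤ D) [K.Full] [K.EssSurj] :
    ((Functor.whiskeringLeft C D E).obj K).Full where
  map_surjective {G H} θ := by
    refine ⟨K.extendNatTransOfFullOfEssSurj θ, ?_⟩
    ext a
    obtain ⟨v, hv⟩ := K.map_surjective (K.objObjPreimageIso (K.obj a)).hom
    have hθ : G.map (K.map v) ≫ θ.app a = θ.app _ ≫ H.map (K.map v) := θ.naturality v
    simp only [Functor.comp_obj, whiskeringLeft_obj_map, Functor.whiskerLeft_app,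
      Functor.extendNatTransOfFullOfEssSurj_app, ← hv, ← hθ]
    simp [hv]

end CategoryTheory

theorem restriction_fully_faithful_of_bij_full_general {A B : Type*}
    [Category A] [Category B]
    (K : A ⥤ B) (hbij : Function.Bijective K.obj) (hfull : K.Full)
    (P Q : Bᵒᵖ ⥤ Type _) :
    Function.Bijective (fun η : P ⟶ Q => CategoryTheory.Functor.whiskerLeft K.op η) := by
  have : K.EssSurj := Functor.essSurj_of_surj hbij.2
  exact ⟨((Functor.whiskeringLeft _ _ _).obj K.op).map_injective,
    ((Functor.whiskeringLeft _ _ _).obj K.op).map_surjective⟩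

/-- Let `K : A ⥤ B` be bijective on objects and full, and let a class of limit
cones `c i` in `A` be specified, each preserved by `K` (so the specified class
in `B` consists of the cones `K.mapCone (c i)`).  Then for presheaves `P, Q` on
`B` sending the specified limits to colimits in `Set`, precomposition with `K`
is bijective on natural transformations; i.e. the restriction functor between
the categories of limit-to-colimit-sending presheaves is fully faithful. -/
theorem restriction_fully_faithful_of_bij_full {A B : Type*}
    [Category A] [Category B]
    (K : A ⥤ B) (hbij : Function.Bijective K.obj) (hfull : K.Full)
    {ι : Type*} (J : ι → Type*) [∀ i, Category (J i)]
    (F : ∀ i, J i ⥤ A) (c : ∀ i, Cone (F i))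
    (hlim : ∀ i, Nonempty (IsLimit (c i)))
    (hKlim : ∀ i, Nonempty (IsLimit (K.mapCone (c i))))
    (P Q : Bᵒᵖ ⥤ Type _)
    (hP : ∀ i, Nonempty (IsColimit (P.mapCocone (K.mapCone (c i)).op)))
    (hQ : ∀ i, Nonempty (IsColimit (Q.mapCocone (K.mapCone (c i)).op))) :
    Function.Bijective (fun η : P ⟶ Q => CategoryTheory.Functor.whiskerLeft K.op η) :=
  restriction_fully_faithful_of_bij_full_general K hbij hfull P Q
end
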